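/- arXiv:2104.06748 — 7 statements merged into one kernel-verified Lean document; each statement's English description precedes it below -/
import Mathlib

section
/- Let M be an ultrametric space and let A be a spherically complete subspace of M. Then A is proximinal in M, i.e., for every x in M there exists a_0 in A such that d(x, a_0) = dist(x, A) = inf{d(x, z) : z in A}. -/
/-- A subset `A` of a metric space is *spherically complete* if every nonempty nested
(totally ordered by inclusion) family of closed balls centered at points of `A` has
nonempty intersection with `A`. -/
def IsSphericallyComplete {M : Type*} [MetricSpace M] (A : Set M) : Prop :=
  ∀ (ι : Type) (c : ι → M) (r : ι → ℝ), Nonempty ι →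
    (∀ i, c i ∈ A) → (∀ i, 0 ≤ r i) →
    (∀ i j, Metric.closedBall (c i) (r i) ⊆ Metric.closedBall (c j) (r j) ∨
      Metric.closedBall (c j) (r j) ⊆ Metric.closedBall (c i) (r i)) →
    (A ∩ ⋂ i, Metric.closedBall (c i) (r i)).Nonempty

/-!
For `x ∈ M`, the balls `closedBall a (dist x a)` with `a ∈ A` form a chain: in an ultrametric
space, if `dist x a ≤ dist x b` then `a` lies in the ball around `b`, and a closed ball is
centred at each of its points. A point `a₀ ∈ A` common to all of them satisfies
`dist x a₀ ≤ max (dist x a) (dist a a₀) = dist x a` for every `a ∈ A`, so it is a nearest point.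
-/

open Metric

namespace IsUltrametricDist

variable {M : Type*} [PseudoMetricSpace M] [IsUltrametricDist M]

lemma dist_le_dist_of_dist_le_dist {x a b : M} (h : dist x a ≤ dist x b) :
    dist a b ≤ dist x b :=
  (dist_triangle_max a x b).trans (max_le (dist_comm a x ▸ h) le_rfl)

lemma closedBall_dist_subset_closedBall_dist {x a b : M} (h : dist x a ≤ dist x b) :
    closedBall a (dist x a) ⊆ closedBall b (dist x b) := by
  rw [closedBall_eq_of_mem (mem_closedBall.2 (dist_le_dist_of_dist_le_dist h))]
  exact closedBall_subset_closedBall h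

lemma dist_le_of_mem_closedBall_dist {x a a₀ : M} (h : a₀ ∈ closedBall a (dist x a)) :
    dist x a₀ ≤ dist x a :=
  (dist_triangle_max x a a₀).trans (max_le le_rfl (dist_comm a₀ a ▸ mem_closedBall.1 h))

end IsUltrametricDist

open IsUltrametricDist in
lemma IsSphericallyComplete.exists_forall_dist_le {M : Type*} [MetricSpace M]
    [IsUltrametricDist M] {A : Set M} (hsc : IsSphericallyComplete A) (hA : A.Nonempty)
    (x : M) : ∃ a₀ ∈ A, ∀ a ∈ A, dist x a₀ ≤ dist x a := by
  -- `hsc` only accepts index types in `Type`, so the balls are indexed by the distances.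
  choose c hcA hcd using fun r : dist x '' A ↦ r.2
  have hne : Nonempty (dist x '' A) := (hA.image (dist x)).to_subtype
  have hchain : ∀ r s : dist x '' A,
      closedBall (c r) (dist x (c r)) ⊆ closedBall (c s) (dist x (c s)) ∨
        closedBall (c s) (dist x (c s)) ⊆ closedBall (c r) (dist x (c r)) := fun r s ↦
    (le_total (dist x (c r)) (dist x (c s))).imp
      closedBall_dist_subset_closedBall_dist closedBall_dist_subset_closedBall_dist
  obtain ⟨a₀, ha₀A, ha₀⟩ :=
    hsc _ c (fun r ↦ dist x (c r)) hne hcA (fun _ ↦ dist_nonneg) hchain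
  refine ⟨a₀, ha₀A, fun a ha ↦ ?_⟩
  let r : dist x '' A := ⟨dist x a, a, ha, rfl⟩
  exact (dist_le_of_mem_closedBall_dist (Set.mem_iInter.1 ha₀ r)).trans_eq (hcd r)

/-- A spherically complete subspace of an ultrametric space is proximinal. -/
theorem spherically_complete_is_proximinal {M : Type*} [MetricSpace M] [IsUltrametricDist M]
    (A : Set M) (hA : A.Nonempty) (hsc : IsSphericallyComplete A) :
    ∀ x : M, ∃ a ∈ A, dist x a = Metric.infDist x A := by
  intro x
  obtain ⟨a₀, ha₀A, ha₀⟩ := hsc.exists_forall_dist_le hA x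
  exact ⟨a₀, ha₀A, le_antisymm ((le_infDist hA).2 ha₀) (infDist_le_dist_of_mem ha₀A)⟩
end

section
/- Suppose M is a spherically complete ultrametric space and T : M → M is a nonexpansive map. Then for every x in M, the closed ball B(x, d(x, Tx)) contains either a fixed point of T or a minimal T-invariant ball. -/
open Metric



/-- The closed ball `B(c, r)` is a *minimal `T`-invariant ball* if `T(B) ⊆ B` and
`d(y, Ty) = r` for each `y ∈ B`. -/
def IsMinimalInvariantBall {M : Type*} [MetricSpace M] (T : M → M) (c : M) (r : ℝ) : Prop :=
  0 ≤ r ∧ Set.MapsTo T (Metric.closedBall c r) (Metric.closedBall c r) ∧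
    ∀ y ∈ Metric.closedBall c r, dist y (T y) = r

private lemma ball_key1 {M : Type*} [MetricSpace M] [IsUltrametricDist M] (T : M → M)
    (hT : ∀ x y : M, dist (T x) (T y) ≤ dist x y) {a b : M}
    (h : b ∈ closedBall a (dist a (T a))) : dist b (T b) ≤ dist a (T a) := by
  rw [mem_closedBall] at h
  calc dist b (T b) ≤ max (dist b a) (dist a (T b)) := IsUltrametricDist.dist_triangle_max _ _ _
    _ ≤ max (dist b a) (max (dist a (T a)) (dist (T a) (T b))) :=
        max_le_max le_rfl (IsUltrametricDist.dist_triangle_max _ _ _)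
    _ ≤ dist a (T a) := by
        simp only [max_le_iff]
        exact ⟨h, le_rfl, (hT a b).trans ((dist_comm a b).trans_le h)⟩

private lemma ball_key2 {M : Type*} [MetricSpace M] [IsUltrametricDist M] (T : M → M)
    (hT : ∀ x y : M, dist (T x) (T y) ≤ dist x y) {a b : M}
    (h : b ∈ closedBall a (dist a (T a))) :
    closedBall b (dist b (T b)) ⊆ closedBall a (dist a (T a)) := by
  intro y hy
  rw [mem_closedBall] at h hy ⊢
  calc dist y a ≤ max (dist y b) (dist b a) := IsUltrametricDist.dist_triangle_max _ _ _
    _ ≤ dist a (T a) := max_le (hy.trans (ball_key1 T hT h)) h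

/-- In a spherically complete ultrametric space, for a nonexpansive map `T`, every ball
`B(x, d(x, Tx))` contains either a fixed point of `T` or a minimal `T`-invariant ball. -/
theorem fixed_point_or_minimal_invariant_ball {M : Type*} [MetricSpace M] [IsUltrametricDist M]
    (hM : IsSphericallyComplete (Set.univ : Set M))
    (T : M → M) (hT : ∀ x y : M, dist (T x) (T y) ≤ dist x y) (x : M) :
    (∃ z ∈ Metric.closedBall x (dist x (T x)), T z = z) ∨
      (∃ c r, Metric.closedBall c r ⊆ Metric.closedBall x (dist x (T x)) ∧
        IsMinimalInvariantBall T c r) := by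
  set S : Set (Set M) :=
    {s | ∃ a ∈ closedBall x (dist x (T x)), s = closedBall a (dist a (T a))} with hS
  have hxS : closedBall x (dist x (T x)) ∈ S := ⟨x, mem_closedBall_self dist_nonneg, rfl⟩
  -- chains have lower bounds
  have hchain : ∀ c ⊆ S, IsChain (· ⊆ ·) c → c.Nonempty → ∃ lb ∈ S, ∀ s ∈ c, lb ⊆ s := by
    intro c hcS hc hne
    -- index by radii
    set ι : Type := {r : ℝ // ∃ a, a ∈ closedBall x (dist x (T x)) ∧ dist a (T a) = r ∧
      closedBall a r ∈ c} with hι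
    have hne' : Nonempty ι := by
      obtain ⟨s, hs⟩ := hne
      obtain ⟨a, ha, rfl⟩ := hcS hs
      exact ⟨⟨dist a (T a), a, ha, rfl, hs⟩⟩
    choose ctr hctr1 hctr2 hctr3 using fun i : ι => i.2
    have hrad : ∀ i : ι, (0:ℝ) ≤ i.1 := fun i => (hctr2 i) ▸ dist_nonneg
    -- same-radius balls in the chain are equal
    have hball : ∀ i : ι, ∀ a, closedBall a i.1 ∈ c → closedBall a i.1 = closedBall (ctr i) i.1 := by
      intro i a ha
      rcases hc.total ha (hctr3 i) with h | h
      · exact (IsUltrametricDist.closedBall_eq_of_mem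
          (h (mem_closedBall_self (hrad i)))).symm
      · exact IsUltrametricDist.closedBall_eq_of_mem (h (mem_closedBall_self (hrad i)))
    have hnested : ∀ i j : ι, closedBall (ctr i) i.1 ⊆ closedBall (ctr j) j.1 ∨
        closedBall (ctr j) j.1 ⊆ closedBall (ctr i) i.1 := fun i j =>
      hc.total (hctr3 i) (hctr3 j)
    obtain ⟨z, -, hz⟩ := hM ι ctr (fun i => i.1) hne' (fun _ => Set.mem_univ _) hrad hnested
    rw [Set.mem_iInter] at hz
    -- z belongs to every element of the chain
    have hzc : ∀ s ∈ c, z ∈ s := by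
      intro s hs
      obtain ⟨a, ha, rfl⟩ := hcS hs
      have : z ∈ closedBall (ctr ⟨dist a (T a), a, ha, rfl, hs⟩) (dist a (T a)) :=
        hz ⟨dist a (T a), a, ha, rfl, hs⟩
      rwa [← hball ⟨dist a (T a), a, ha, rfl, hs⟩ a hs] at this
    have hzx : z ∈ closedBall x (dist x (T x)) := by
      obtain ⟨s, hs⟩ := hne
      obtain ⟨a, ha, rfl⟩ := hcS hs
      exact ball_key2 T hT ha (hzc _ hs)
    refine ⟨closedBall z (dist z (T z)), ⟨z, hzx, rfl⟩, ?_⟩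
    intro s hs
    obtain ⟨a, ha, rfl⟩ := hcS hs
    exact ball_key2 T hT (hzc _ hs)
  obtain ⟨m, hmx, hm⟩ := zorn_superset_nonempty S hchain _ hxS
  obtain ⟨c0, hc0x, rfl⟩ := hm.prop
  rcases eq_or_ne (dist c0 (T c0)) 0 with h0 | h0
  · exact Or.inl ⟨c0, ball_key2 T hT hc0x (mem_closedBall_self dist_nonneg),
      (dist_eq_zero.mp ((dist_comm (T c0) c0) ▸ h0)).symm ▸ (dist_eq_zero.mp h0).symm ▸ rfl⟩
  · refine Or.inr ⟨c0, dist c0 (T c0), hmx, dist_nonneg, ?_, ?_⟩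
    · intro y hy
      exact ball_key2 T hT hy (by rw [mem_closedBall, dist_comm])
    · intro y hy
      refine le_antisymm (ball_key1 T hT hy) ?_
      by_contra hlt
      push_neg at hlt
      have hyx : y ∈ closedBall x (dist x (T x)) := hmx hy
      have hsub : closedBall y (dist y (T y)) ⊆ closedBall c0 (dist c0 (T c0)) :=
        ball_key2 T hT hy
      have heq := hm.eq_of_subset ⟨y, hyx, rfl⟩ hsub
      -- but c0 ∉ closedBall y (dist y (T y))
      have hc0mem : c0 ∈ closedBall y (dist y (T y)) := by
        rw [heq]; exact mem_closedBall_self dist_nonneg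
      rw [mem_closedBall] at hc0mem
      have : dist c0 (T c0) < dist c0 (T c0) := by
        calc dist c0 (T c0) ≤ max (dist c0 y) (dist y (T c0)) :=
              IsUltrametricDist.dist_triangle_max _ _ _
          _ ≤ max (dist c0 y) (max (dist y (T y)) (dist (T y) (T c0))) :=
              max_le_max le_rfl (IsUltrametricDist.dist_triangle_max _ _ _)
          _ < dist c0 (T c0) := by
              have h1 : dist c0 y < dist c0 (T c0) := hc0mem.trans_lt hlt
              have h2 : dist (T y) (T c0) < dist c0 (T c0) :=
                ((hT y c0).trans ((dist_comm y c0).trans_le hc0mem)).trans_lt hlt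
              exact max_lt h1 (max_lt hlt h2)
      exact absurd this (lt_irrefl _)
end

section
/- Let (M, d) be a spherically complete ultrametric space and let T : M → M be a nonexpansive map which has the weak-regular property. Then T has a fixed point in any T-invariant closed ball, i.e., for every closed ball B with T(B) ⊆ B there exists z in B with Tz = z. -/
/-- In a spherically complete ultrametric space, a nonexpansive map with the weak-regular
property has a fixed point in every `T`-invariant closed ball. -/
theorem fixed_point_of_weak_regular {M : Type*} [MetricSpace M] [IsUltrametricDist M]
    (hM : IsSphericallyComplete (Set.univ : Set M))
    (T : M → M) (hT : ∀ x y : M, dist (T x) (T y) ≤ dist x y)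
    (hwr : ∀ x : M, x ≠ T x →
      Filter.limsup (fun n : ℕ => dist (T^[n] x) (T^[n + 1] x)) Filter.atTop < dist x (T x))
    (c : M) (r : ℝ) (hr : 0 ≤ r)
    (hinv : Set.MapsTo T (Metric.closedBall c r) (Metric.closedBall c r)) :
    ∃ z ∈ Metric.closedBall c r, T z = z := by
  classical
  haveI : Nonempty M := ⟨c⟩
  set B := Metric.closedBall c r with hB
  have hcB : c ∈ B := Metric.mem_closedBall_self hr
  have tri : ∀ a b e : M, dist a e ≤ max (dist a b) (dist b e) :=
    fun a b e => IsUltrametricDist.dist_triangle_max a b e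
  have key : ∀ x y : M, dist x y ≤ dist x (T x) → dist y (T y) ≤ dist x (T x) := by
    intro x y h
    refine (tri y x (T y)).trans (max_le ?_ ?_)
    · rwa [dist_comm]
    · refine (tri x (T x) (T y)).trans (max_le le_rfl ?_)
      exact (hT x y).trans h
  have sub : ∀ (x y : M) (r1 r2 : ℝ), dist y x ≤ r1 → r2 ≤ r1 →
      Metric.closedBall y r2 ⊆ Metric.closedBall x r1 := by
    intro x y r1 r2 hyx hr12 w hw
    simp only [Metric.mem_closedBall] at *
    exact (tri w y x).trans (max_le (hw.trans hr12) hyx)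
  have radle : ∀ x ∈ B, dist x (T x) ≤ r := by
    intro x hx
    have h2 := hinv hx
    simp only [hB, Metric.mem_closedBall] at *
    refine (tri x c (T x)).trans (max_le hx ?_)
    rwa [dist_comm]
  set S : Set (Set M) := {s | ∃ x, x ∈ B ∧ s = Metric.closedBall x (dist x (T x))} with hS
  have hchainlb : ∀ cC ⊆ S, IsChain (· ⊆ ·) cC → cC.Nonempty →
      ∃ lb ∈ S, ∀ s ∈ cC, lb ⊆ s := by
    intro cC hsub hchain hne
    obtain ⟨s0, hs0⟩ := hne
    have hx : ∀ s ∈ cC, ∃ x, x ∈ B ∧ s = Metric.closedBall x (dist x (T x)) :=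
      fun s hs => hsub hs
    choose! x hxB hxs using hx
    set R : Set ℝ := {t | ∃ s ∈ cC, dist (x s) (T (x s)) = t} with hR
    have hRne : Nonempty R := ⟨⟨_, s0, hs0, rfl⟩⟩
    have hpick : ∀ t : R, ∃ s ∈ cC, dist (x s) (T (x s)) = (t : ℝ) := fun t => t.2
    choose g hg1 hg2 using hpick
    have hball : ∀ t : R, Metric.closedBall (x (g t)) (t : ℝ) = g t := by
      intro t; rw [← hg2 t]; exact (hxs _ (hg1 t)).symm
    have hnest : ∀ i j : R,
        Metric.closedBall (x (g i)) (i : ℝ) ⊆ Metric.closedBall (x (g j)) (j : ℝ) ∨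
        Metric.closedBall (x (g j)) (j : ℝ) ⊆ Metric.closedBall (x (g i)) (i : ℝ) := by
      intro i j
      rw [hball i, hball j]
      rcases eq_or_ne (g i) (g j) with h | h
      · exact Or.inl (h ▸ subset_rfl)
      · exact hchain (hg1 i) (hg1 j) h
    obtain ⟨z, -, hz⟩ := hM R (fun t => x (g t)) (fun t => (t : ℝ)) hRne
      (fun _ => trivial) (fun t => by simpa using (hg2 t) ▸ (dist_nonneg : (0:ℝ) ≤ dist (x (g t)) (T (x (g t))))) hnest
    simp only [Set.mem_iInter] at hz
    have hzs : ∀ s ∈ cC, z ∈ s ∧ dist z (T z) ≤ dist (x s) (T (x s)) := by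
      intro s hs
      set t : R := ⟨dist (x s) (T (x s)), s, hs, rfl⟩ with ht
      have hzt : z ∈ g t := by rw [← hball t]; exact hz t
      have htval : (t : ℝ) = dist (x s) (T (x s)) := rfl
      have hgs : g t ⊆ s := by
        rcases eq_or_ne (g t) s with h | h
        · exact h ▸ subset_rfl
        rcases hchain (hg1 t) hs h with h' | h'
        · exact h'
        · have hxmem : dist (x (g t)) (x s) ≤ dist (x s) (T (x s)) := by
            have h2 := h' (by rw [hxs s hs]; exact Metric.mem_closedBall_self dist_nonneg)
            rw [← hball t] at h2
            simp only [Metric.mem_closedBall, htval] at h2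
            rw [dist_comm]; exact h2
          have : s = Metric.closedBall (x s) (dist (x s) (T (x s))) := hxs s hs
          rw [this, ← hball t, htval]
          exact sub _ _ _ _ hxmem le_rfl
      have hzsmem : z ∈ s := hgs hzt
      refine ⟨hzsmem, key (x s) z ?_⟩
      have := hzsmem
      rw [hxs s hs] at this
      simp only [Metric.mem_closedBall] at this
      rwa [dist_comm] at this
    have hzB : z ∈ B := by
      obtain ⟨hz0, -⟩ := hzs s0 hs0
      rw [hxs s0 hs0] at hz0
      simp only [Metric.mem_closedBall] at hz0
      have hx0B := hxB s0 hs0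
      simp only [hB, Metric.mem_closedBall] at *
      exact (tri z (x s0) c).trans (max_le (hz0.trans (radle _ (hxB s0 hs0))) hx0B)
    refine ⟨Metric.closedBall z (dist z (T z)), ⟨z, hzB, rfl⟩, ?_⟩
    intro s hs
    obtain ⟨hz1, hz2⟩ := hzs s hs
    rw [hxs s hs] at hz1 ⊢
    simp only [Metric.mem_closedBall] at hz1
    exact sub _ _ _ _ hz1 hz2
  have hBc : Metric.closedBall c (dist c (T c)) ∈ S := ⟨c, hcB, rfl⟩
  obtain ⟨m, -, hmS, hmin⟩ := zorn_superset_nonempty S hchainlb _ hBc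
  obtain ⟨z, hzB, hzm⟩ := hmS
  refine ⟨z, hzB, ?_⟩
  by_contra hne
  have hne' : z ≠ T z := fun h => hne h.symm
  have hlim := hwr z hne'
  have hmono : ∀ n : ℕ, dist (T^[n] z) (T^[n + 1] z) ≤ dist z (T z) := by
    intro n
    induction n with
    | zero => simp
    | succ k ih =>
      have e : T^[k + 1] z = T (T^[k] z) := Function.iterate_succ_apply' T k z
      have e2 : T^[k + 1 + 1] z = T (T^[k + 1] z) := Function.iterate_succ_apply' T (k + 1) z
      refine le_trans ?_ ih
      rw [e2, e]
      exact hT _ _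
  have hzit : ∀ n : ℕ, dist z (T^[n] z) ≤ dist z (T z) := by
    intro n
    induction n with
    | zero => simpa using dist_nonneg
    | succ k ih =>
      exact (tri z (T^[k] z) (T^[k + 1] z)).trans (max_le ih (hmono k))
  have hbdd : Filter.IsBoundedUnder (· ≤ ·) Filter.atTop
      (fun n : ℕ => dist (T^[n] z) (T^[n + 1] z)) :=
    Filter.isBoundedUnder_of ⟨dist z (T z), hmono⟩
  obtain ⟨n, hn⟩ := (Filter.eventually_lt_of_limsup_lt hlim hbdd).exists
  set y := T^[n] z with hy
  have hTy : T y = T^[n + 1] z := (Function.iterate_succ_apply' T n z).symm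
  have hny : dist y (T y) < dist z (T z) := by rw [hTy]; exact hn
  have hzy : dist z y ≤ dist z (T z) := hzit n
  have hyB : y ∈ B := Set.MapsTo.iterate hinv n hzB
  have hBy : Metric.closedBall y (dist y (T y)) ∈ S := ⟨y, hyB, rfl⟩
  have hsubm : Metric.closedBall y (dist y (T y)) ⊆ m := by
    rw [hzm]
    exact sub _ _ _ _ (by rw [dist_comm]; exact hzy) hny.le
  have heq : m ⊆ Metric.closedBall y (dist y (T y)) := hmin hBy hsubm
  have hzy' : dist z y ≤ dist y (T y) := by
    have hmem : z ∈ Metric.closedBall y (dist y (T y)) :=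
      heq (by rw [hzm]; exact Metric.mem_closedBall_self dist_nonneg)
    simpa [Metric.mem_closedBall] using hmem
  have hcon : dist z (T z) < dist z (T z) := by
    calc dist z (T z) ≤ max (dist z y) (dist y (T z)) := tri _ _ _
      _ ≤ max (dist z y) (max (dist y (T y)) (dist (T y) (T z))) :=
          max_le_max le_rfl (tri _ _ _)
      _ < dist z (T z) := by
          refine max_lt (hzy'.trans_lt hny) (max_lt hny ?_)
          refine (hT y z).trans_lt ?_
          rw [dist_comm]
          exact hzy'.trans_lt hny
  exact absurd hcon (lt_irrefl _)
end

section
/- Let (A, B) be a proximinal pair of nonempty subsets of an ultrametric space (M, d) with B bounded. If δ(B) ≤ dist(A, B), then A_0 is nonempty and B_0 = B. -/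
/-- The distance between two sets: `dist(A, B) = inf {d(a, b) : a ∈ A, b ∈ B}`. -/
noncomputable def setDist {M : Type*} [MetricSpace M] (A B : Set M) : ℝ :=
  sInf {d : ℝ | ∃ a ∈ A, ∃ b ∈ B, d = dist a b}

/-- If `(A, B)` is a proximinal pair in an ultrametric space with `B` bounded and
`δ(B) ≤ dist(A, B)`, then `A₀` is nonempty and `B₀ = B`. -/
theorem A0_nonempty_and_B0_eq_B {M : Type*} [MetricSpace M] [IsUltrametricDist M]
    (A B : Set M) (hA : A.Nonempty) (hB : B.Nonempty)
    (hpA : ∀ x : M, ∃ a ∈ A, dist x a = Metric.infDist x A)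
    (hpB : ∀ x : M, ∃ b ∈ B, dist x b = Metric.infDist x B)
    (hbd : Bornology.IsBounded B)
    (hdiam : Metric.diam B ≤ setDist A B) :
    {x ∈ A | ∃ y ∈ B, dist x y = setDist A B}.Nonempty ∧
      {y ∈ B | ∃ x ∈ A, dist x y = setDist A B} = B := by
  set s : Set ℝ := {d : ℝ | ∃ a ∈ A, ∃ b ∈ B, d = dist a b} with hs
  have hsne : s.Nonempty := by
    obtain ⟨a, ha⟩ := hA; obtain ⟨b, hb⟩ := hB
    exact ⟨dist a b, a, ha, b, hb, rfl⟩
  have hbdd : BddBelow s := ⟨0, fun d ⟨a, _, b, _, hd⟩ => hd ▸ dist_nonneg⟩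
  have hle : ∀ a ∈ A, ∀ b ∈ B, setDist A B ≤ dist a b := fun a ha b hb =>
    csInf_le hbdd ⟨a, ha, b, hb, rfl⟩
  -- key: for every b ∈ B, infDist b A = setDist A B
  have key : ∀ b ∈ B, Metric.infDist b A = setDist A B := by
    intro b hb
    apply le_antisymm
    · apply le_csInf hsne
      rintro d ⟨a', ha', b', hb', rfl⟩
      have h1 : dist b a' ≤ max (dist b b') (dist b' a') :=
        IsUltrametricDist.dist_triangle_max b b' a'
      have h2 : dist b b' ≤ Metric.diam B := Metric.dist_le_diam_of_mem hbd hb hb'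
      have h3 : dist b b' ≤ dist a' b' :=
        h2.trans (hdiam.trans (hle a' ha' b' hb'))
      have h4 : dist b a' ≤ dist a' b' := by
        rw [dist_comm b' a'] at h1
        exact h1.trans (max_le h3 le_rfl)
      exact le_trans (Metric.infDist_le_dist_of_mem ha') h4
    · obtain ⟨a, ha, hda⟩ := hpA b
      rw [← hda, dist_comm]
      exact hle a ha b hb
  obtain ⟨b, hb⟩ := hB
  obtain ⟨a, ha, hda⟩ := hpA b
  have hda' : dist a b = setDist A B := by rw [dist_comm] at hda; rw [hda, key b hb]
  constructor
  · exact ⟨a, ha, b, hb, hda'⟩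
  · ext y
    simp only [Set.mem_setOf_eq]
    constructor
    · rintro ⟨hy, _⟩; exact hy
    · intro hy
      obtain ⟨a', ha', hda2⟩ := hpA y
      refine ⟨hy, a', ha', ?_⟩
      rw [dist_comm] at hda2
      rw [hda2, key y hy]
end

section
/- Let (A, B) be a spherically complete pair in an ultrametric space (M, d), with B bounded and δ(B) ≤ dist(A, B). Then A_0 and B_0 are nonempty and (A_0, B_0) is a spherically complete pair of M. -/
open Metric

private lemma ultra_ball_subset {M : Type*} [MetricSpace M] [IsUltrametricDist M]
    {c c' : M} {r r' : ℝ} (h1 : dist c c' ≤ r') (h2 : r ≤ r') :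
    closedBall c r ⊆ closedBall c' r' := by
  intro x hx
  simp only [mem_closedBall] at hx ⊢
  calc dist x c' ≤ max (dist x c) (dist c c') := IsUltrametricDist.dist_triangle_max _ _ _
    _ ≤ r' := max_le (hx.trans h2) h1

/-- If `(A, B)` is a spherically complete pair in an ultrametric space with `B` bounded and
`δ(B) ≤ dist(A, B)`, then `(A₀, B₀)` is a nonempty spherically complete pair. -/
theorem proximal_pair_spherically_complete {M : Type*} [MetricSpace M] [IsUltrametricDist M]
    (A B : Set M) (hA : A.Nonempty) (hB : B.Nonempty)
    (hscA : IsSphericallyComplete A) (hscB : IsSphericallyComplete B)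
    (hbd : Bornology.IsBounded B)
    (hdiam : Metric.diam B ≤ setDist A B) :
    {x ∈ A | ∃ y ∈ B, dist x y = setDist A B}.Nonempty ∧
      {y ∈ B | ∃ x ∈ A, dist x y = setDist A B}.Nonempty ∧
      IsSphericallyComplete {x ∈ A | ∃ y ∈ B, dist x y = setDist A B} ∧
      IsSphericallyComplete {y ∈ B | ∃ x ∈ A, dist x y = setDist A B} := by
  obtain ⟨b0, hb0⟩ := hB
  obtain ⟨a1, ha1⟩ := hA
  set d0 := setDist A B with hd0def
  have hSne : {d : ℝ | ∃ a ∈ A, ∃ b ∈ B, d = dist a b}.Nonempty :=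
    ⟨dist a1 b0, a1, ha1, b0, hb0, rfl⟩
  have hSbdd : BddBelow {d : ℝ | ∃ a ∈ A, ∃ b ∈ B, d = dist a b} := by
    refine ⟨0, ?_⟩
    rintro d ⟨a, -, b, -, rfl⟩
    exact dist_nonneg
  have hlow : ∀ a ∈ A, ∀ b ∈ B, d0 ≤ dist a b := fun a ha b hb =>
    csInf_le hSbdd ⟨a, ha, b, hb, rfl⟩
  have hd0nn : 0 ≤ d0 := le_csInf hSne (by rintro d ⟨a, -, b, -, rfl⟩; exact dist_nonneg)
  have hconst : ∀ a ∈ A, ∀ b ∈ B, ∀ b' ∈ B, dist a b ≤ dist a b' := by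
    intro a ha b hb b' hb'
    have h1 : dist b' b ≤ d0 := (Metric.dist_le_diam_of_mem hbd hb' hb).trans hdiam
    calc dist a b ≤ max (dist a b') (dist b' b) := IsUltrametricDist.dist_triangle_max _ _ _
      _ ≤ dist a b' := max_le le_rfl (h1.trans (hlow a ha b' hb'))
  have hconst' : ∀ a ∈ A, ∀ b ∈ B, ∀ b' ∈ B, dist a b = dist a b' :=
    fun a ha b hb b' hb' => le_antisymm (hconst a ha b hb b' hb') (hconst a ha b' hb' b hb)
  -- A₀ is nonempty: there is a₀ ∈ A with dist a₀ b0 = d0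
  have hA0ne : ∃ x ∈ A, dist x b0 = d0 := by
    let ι : Type := {s : ℝ // ∃ a ∈ A, dist a b0 = s}
    have hι : Nonempty ι := ⟨⟨dist a1 b0, a1, ha1, rfl⟩⟩
    have hc : ∀ i : ι, ∃ a ∈ A, dist a b0 = i.1 := fun i => i.2
    choose c hcA hcr using hc
    have hmem : ∀ i : ι, dist (c i) b0 ≤ i.1 := fun i => le_of_eq (hcr i)
    have hchain : ∀ i j : ι, closedBall (c i) i.1 ⊆ closedBall (c j) j.1 ∨
        closedBall (c j) j.1 ⊆ closedBall (c i) i.1 := by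
      intro i j
      have hd : ∀ i j : ι, i.1 ≤ j.1 → dist (c i) (c j) ≤ j.1 := by
        intro i j h
        calc dist (c i) (c j) ≤ max (dist (c i) b0) (dist b0 (c j)) :=
              IsUltrametricDist.dist_triangle_max _ _ _
          _ ≤ j.1 := max_le ((hmem i).trans h) (by rw [dist_comm]; exact hmem j)
      rcases le_total i.1 j.1 with h | h
      · exact Or.inl (ultra_ball_subset (hd i j h) h)
      · exact Or.inr (ultra_ball_subset (hd j i h) h)
    obtain ⟨x, hxA, hx⟩ := hscA ι c (fun i => i.1) hι hcA
      (fun i => by show 0 ≤ (i : ℝ); rw [← hcr i]; exact dist_nonneg) hchain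
    refine ⟨x, hxA, le_antisymm ?_ (hlow x hxA b0 hb0)⟩
    refine le_csInf hSne ?_
    rintro dd ⟨a, haA, b, hbB, rfl⟩
    rw [← hconst' a haA b0 hb0 b hbB]
    have hxi : x ∈ closedBall (c ⟨dist a b0, a, haA, rfl⟩) (dist a b0) :=
      Set.mem_iInter.mp hx ⟨dist a b0, a, haA, rfl⟩
    rw [mem_closedBall] at hxi
    calc dist x b0 ≤ max (dist x (c ⟨dist a b0, a, haA, rfl⟩))
          (dist (c ⟨dist a b0, a, haA, rfl⟩) b0) := IsUltrametricDist.dist_triangle_max _ _ _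
      _ ≤ dist a b0 := max_le hxi (hmem _)
  obtain ⟨a0, ha0A, ha0d⟩ := hA0ne
  -- B₀ = B
  have hB0eq : {y ∈ B | ∃ x ∈ A, dist x y = d0} = B := by
    ext y
    constructor
    · exact fun hy => hy.1
    · intro hy
      exact ⟨hy, a0, ha0A, by rw [hconst' a0 ha0A y hy b0 hb0]; exact ha0d⟩
  -- A₀ is spherically complete
  have hscA0 : IsSphericallyComplete {x ∈ A | ∃ y ∈ B, dist x y = d0} := by
    intro ι c r hι hc hr hchain
    have hcA : ∀ i, c i ∈ A := fun i => (hc i).1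
    have hcd : ∀ i, dist (c i) b0 = d0 := by
      intro i
      obtain ⟨-, y, hy, hdy⟩ := hc i
      rw [hconst' (c i) (hcA i) b0 hb0 y hy, hdy]
    have hdista0 : ∀ i, dist a0 (c i) ≤ d0 := fun i =>
      le_trans (IsUltrametricDist.dist_triangle_max a0 b0 (c i))
        (max_le (le_of_eq ha0d) (by rw [dist_comm]; exact le_of_eq (hcd i)))
    obtain ⟨x, hxA, hx⟩ := hscA (Option ι) (fun o => o.elim a0 c) (fun o => o.elim d0 r)
      ⟨none⟩
      (fun o => by cases o with | none => exact ha0A | some i => exact hcA i)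
      (fun o => by cases o with | none => exact hd0nn | some i => exact hr i)
      (by
        intro o o'
        have key : ∀ i, closedBall a0 d0 ⊆ closedBall (c i) (r i) ∨
            closedBall (c i) (r i) ⊆ closedBall a0 d0 := by
          intro i
          rcases le_total d0 (r i) with h | h
          · exact Or.inl (ultra_ball_subset ((hdista0 i).trans h) h)
          · exact Or.inr (ultra_ball_subset (by rw [dist_comm]; exact hdista0 i) h)
        cases o with
        | none =>
          cases o' with
          | none => exact Or.inl subset_rfl
          | some j => exact key j
        | some i =>
          cases o' with
          | none => exact (key i).symm
          | some j => exact hchain i j)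
    have hx0 : dist x a0 ≤ d0 := by
      have := Set.mem_iInter.mp hx none
      rwa [mem_closedBall] at this
    refine ⟨x, ⟨hxA, b0, hb0, le_antisymm ?_ (hlow x hxA b0 hb0)⟩, ?_⟩
    · calc dist x b0 ≤ max (dist x a0) (dist a0 b0) := IsUltrametricDist.dist_triangle_max _ _ _
        _ ≤ d0 := max_le hx0 (le_of_eq ha0d)
    · exact Set.mem_iInter.mpr fun i => Set.mem_iInter.mp hx (some i)
  refine ⟨⟨a0, ha0A, b0, hb0, ha0d⟩, ⟨b0, hb0, a0, ha0A, ha0d⟩, hscA0, ?_⟩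
  rw [show {y | y ∈ B ∧ ∃ x ∈ A, dist x y = d0} = B from hB0eq]
  exact hscB
end

section
/- Let (A, B) be a spherically complete pair of an ultrametric space M with B bounded and δ(B) ≤ dist(A, B). Suppose T : A ∪ B → A ∪ B is a noncyclic nonexpansive mapping which is strictly contractive on orbit. Then there exist a* ∈ A and b* ∈ B such that Ta* = a*, Tb* = b*, and d(a*, b*) = dist(A, B). -/
section Aux

variable {M : Type*} [MetricSpace M] [IsUltrametricDist M]

lemma ultra_ball_subset_s8 {x y : M} {r s : ℝ} (hxy : dist x y ≤ s) (hrs : r ≤ s) :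
    Metric.closedBall x r ⊆ Metric.closedBall y s := fun z hz => by
  simp only [Metric.mem_closedBall] at *
  exact (IsUltrametricDist.dist_triangle_max z x y).trans (max_le (hz.trans hrs) hxy)

/-- Zorn-style minimal-ball lemma. -/
lemma exists_minimal_center {S : Set M} (hS : IsSphericallyComplete S) (hne : S.Nonempty)
    (ρ : M → ℝ) (h0 : ∀ a ∈ S, 0 ≤ ρ a)
    (hmono : ∀ z ∈ S, ∀ a ∈ S, dist z a ≤ ρ a → ρ z ≤ ρ a) :
    ∃ a ∈ S, ∀ z ∈ S, dist z a ≤ ρ a → dist a z ≤ ρ z := by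
  classical
  -- relation on ↥S : r x y ↔ "y is below x", i.e. ball of y inside ball of x
  let r : ↥S → ↥S → Prop := fun x y => dist (y : M) (x : M) ≤ ρ (x : M)
  have hrdef : ∀ x y : ↥S, r x y ↔ dist (y : M) (x : M) ≤ ρ (x : M) := fun _ _ => Iff.rfl
  have htrans : Transitive r := by
    intro x y z hxy hyz
    rw [hrdef] at hxy hyz ⊢
    have hρ : ρ (y : M) ≤ ρ (x : M) := hmono _ y.2 _ x.2 hxy
    calc dist (z : M) (x : M) ≤ max (dist (z : M) (y : M)) (dist (y : M) (x : M)) :=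
          IsUltrametricDist.dist_triangle_max _ _ _
      _ ≤ ρ (x : M) := max_le (hyz.trans hρ) hxy
  have hchain : ∀ c, IsChain r c → ∃ ub, ∀ a ∈ c, r a ub := by
    intro c hc
    rcases c.eq_empty_or_nonempty with rfl | hcne
    · exact ⟨⟨hne.choose, hne.choose_spec⟩, by simp⟩
    · -- index balls by their radii (a `Type 0`)
      set ι : Type := {t : ℝ // ∃ x ∈ c, ρ (x : M) = t} with hι
      have hpick : ∀ i : ι, ∃ x ∈ c, ρ (x : M) = (i : ℝ) := fun i => i.2
      choose pick hpickc hpickρ using hpick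
      have hcomp : ∀ x ∈ c, ∀ y ∈ c, dist (x : M) (y : M) ≤ max (ρ (x : M)) (ρ (y : M)) := by
        intro x hx y hy
        rcases eq_or_ne x y with rfl | hxy
        · simpa using h0 _ x.2
        · rcases hc hx hy hxy with h | h
          · rw [hrdef] at h
            exact (dist_comm (y : M) (x : M) ▸ h).trans (le_max_left _ _)
          · rw [hrdef] at h
            exact h.trans (le_max_right _ _)
      have hnonempty : Nonempty ι := ⟨⟨ρ (hcne.choose : M), hcne.choose, hcne.choose_spec, rfl⟩⟩
      have hnested : ∀ i j : ι,
          Metric.closedBall ((pick i : M)) (i : ℝ) ⊆ Metric.closedBall ((pick j : M)) (j : ℝ) ∨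
          Metric.closedBall ((pick j : M)) (j : ℝ) ⊆ Metric.closedBall ((pick i : M)) (i : ℝ) := by
        intro i j
        rcases le_total (i : ℝ) (j : ℝ) with h | h
        · left
          refine ultra_ball_subset_s8 ?_ h
          have := hcomp _ (hpickc i) _ (hpickc j)
          rwa [hpickρ i, hpickρ j, max_eq_right h] at this
        · right
          refine ultra_ball_subset_s8 ?_ h
          have := hcomp _ (hpickc j) _ (hpickc i)
          rwa [hpickρ j, hpickρ i, max_eq_right h] at this
      obtain ⟨z, hzS, hz⟩ := hS ι (fun i => (pick i : M)) (fun i => (i : ℝ)) hnonempty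
        (fun i => (pick i).2) (fun i => le_of_le_of_eq (h0 _ (pick i).2) (hpickρ i)) hnested
      refine ⟨⟨z, hzS⟩, ?_⟩
      intro a ha
      rw [hrdef]
      have hi : ∃ x ∈ c, ρ (x : M) = ρ (a : M) := ⟨a, ha, rfl⟩
      set i : ι := ⟨ρ (a : M), hi⟩ with hidef
      have hz' : z ∈ Metric.closedBall ((pick i : M)) (ρ (a : M)) := by
        have := Set.mem_iInter.mp hz i
        simpa using this
      have hda : dist (pick i : M) (a : M) ≤ ρ (a : M) := by
        have := hcomp _ (hpickc i) _ ha
        rwa [hpickρ i, max_self] at this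
      show dist (z : M) (a : M) ≤ ρ (a : M)
      calc dist z (a : M) ≤ max (dist z (pick i : M)) (dist (pick i : M) (a : M)) :=
            IsUltrametricDist.dist_triangle_max _ _ _
        _ ≤ ρ (a : M) := max_le (Metric.mem_closedBall.mp hz') hda
  obtain ⟨m, hm⟩ := exists_maximal_of_chains_bounded hchain (fun {a b c} hab hbc => htrans hab hbc)
  exact ⟨m, m.2, fun z hz hzm => (hrdef _ _).mp (hm ⟨z, hz⟩ ((hrdef _ _).mpr hzm))⟩

/-- Fixed point lemma (Priess-Crampe–Ribenboim style). -/
lemma exists_fixed_point {S : Set M} (hS : IsSphericallyComplete S) (hne : S.Nonempty)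
    (T : M → M) (hT : Set.MapsTo T S S)
    (hnexp : ∀ x ∈ S, ∀ y ∈ S, dist (T x) (T y) ≤ dist x y)
    (hsco : ∀ x ∈ S, T x ≠ x → dist (T (T x)) (T x) < dist (T x) x) :
    ∃ a ∈ S, T a = a := by
  have hmono : ∀ z ∈ S, ∀ x ∈ S, dist z x ≤ dist (T x) x → dist (T z) z ≤ dist (T x) x := by
    intro z hzS x hxS hzx
    calc dist (T z) z ≤ max (dist (T z) (T x)) (dist (T x) z) :=
          IsUltrametricDist.dist_triangle_max _ _ _
      _ ≤ max (dist z x) (max (dist (T x) x) (dist x z)) :=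
          max_le_max (hnexp z hzS x hxS) (IsUltrametricDist.dist_triangle_max _ _ _)
      _ ≤ dist (T x) x := by
          rw [dist_comm x z]
          exact max_le hzx (max_le (le_refl _) hzx)
  obtain ⟨a, haS, hmin⟩ := exists_minimal_center hS hne (fun x => dist (T x) x)
    (fun x _ => dist_nonneg) hmono
  refine ⟨a, haS, ?_⟩
  by_contra hTa
  have hz := hmin (T a) (hT haS) (le_refl _)
  have hlt := hsco a haS hTa
  rw [dist_comm (a : M) (T a)] at hz
  exact absurd (hz.trans_lt hlt) (lt_irrefl _)

end Aux

/-- A noncyclic nonexpansive map which is strictly contractive on orbit, on a spherically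
complete pair `(A, B)` with `δ(B) ≤ dist(A, B)`, has fixed points `a* ∈ A`, `b* ∈ B` with
`d(a*, b*) = dist(A, B)`. -/
theorem best_proximity_fixed_points_contractive_on_orbit {M : Type*} [MetricSpace M]
    [IsUltrametricDist M]
    (A B : Set M) (hA : A.Nonempty) (hB : B.Nonempty)
    (hscA : IsSphericallyComplete A) (hscB : IsSphericallyComplete B)
    (hbd : Bornology.IsBounded B)
    (hdiam : Metric.diam B ≤ setDist A B)
    (T : M → M) (hTA : Set.MapsTo T A A) (hTB : Set.MapsTo T B B)
    (hne : ∀ x ∈ A ∪ B, ∀ y ∈ A ∪ B, dist (T x) (T y) ≤ dist x y)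
    (hsco : ∀ x ∈ A ∪ B, T x ≠ x → dist (T (T x)) (T x) < dist (T x) x) :
    ∃ a ∈ A, ∃ b ∈ B, T a = a ∧ T b = b ∧ dist a b = setDist A B := by
  classical
  set s0 : Set ℝ := {d : ℝ | ∃ a ∈ A, ∃ b ∈ B, d = dist a b} with hs0
  have hsetDist : setDist A B = sInf s0 := rfl
  have hs0ne : s0.Nonempty := ⟨dist hA.choose hB.choose, hA.choose, hA.choose_spec,
    hB.choose, hB.choose_spec, rfl⟩
  have hs0bdd : BddBelow s0 := ⟨0, by rintro d ⟨a, _, b, _, rfl⟩; exact dist_nonneg⟩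
  have hD_le : ∀ a ∈ A, ∀ b ∈ B, setDist A B ≤ dist a b := by
    intro a ha b hb
    exact csInf_le hs0bdd ⟨a, ha, b, hb, rfl⟩
  have hD0 : 0 ≤ setDist A B :=
    le_csInf hs0ne (by rintro d ⟨a, _, b, _, rfl⟩; exact dist_nonneg)
  -- fixed point b0 in B
  obtain ⟨b0, hb0B, hb0⟩ := exists_fixed_point hscB hB T hTB
    (fun x hx y hy => hne x (Or.inr hx) y (Or.inr hy))
    (fun x hx => hsco x (Or.inr hx))
  -- for a ∈ A, dist a b is independent of b ∈ B
  have hBB : ∀ b ∈ B, ∀ b' ∈ B, dist b b' ≤ setDist A B := by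
    intro b hb b' hb'
    exact (Metric.dist_le_diam_of_mem hbd hb hb').trans hdiam
  have hkey : ∀ a ∈ A, ∀ b ∈ B, dist a b = dist a b0 := by
    intro a ha b hb
    have h1 : dist a b ≤ dist a b0 :=
      (IsUltrametricDist.dist_triangle_max a b0 b).trans (max_le (le_refl _)
        (((hBB b0 hb0B b hb)).trans (hD_le a ha b0 hb0B)))
    have h2 : dist a b0 ≤ dist a b :=
      (IsUltrametricDist.dist_triangle_max a b b0).trans (max_le (le_refl _)
        (((hBB b hb b0 hb0B)).trans (hD_le a ha b hb)))
    exact le_antisymm h1 h2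
  -- minimize f a = dist a b0 over A
  have hfmono : ∀ z ∈ A, ∀ a ∈ A, dist z a ≤ dist a b0 → dist z b0 ≤ dist a b0 := by
    intro z hz a ha hza
    exact (IsUltrametricDist.dist_triangle_max z a b0).trans (max_le hza (le_refl _))
  obtain ⟨a1, ha1A, ha1min⟩ := exists_minimal_center hscA hA (fun a => dist a b0)
    (fun a _ => dist_nonneg) hfmono
  have ha1dist : dist a1 b0 = setDist A B := by
    refine le_antisymm ?_ (hD_le a1 ha1A b0 hb0B)
    by_contra hlt
    push_neg at hlt
    rw [hsetDist] at hlt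
    obtain ⟨d, ⟨a, ha, b, hb, rfl⟩, hdlt⟩ := exists_lt_of_csInf_lt hs0ne hlt
    rw [hkey a ha b hb] at hdlt
    have haa1 : dist a a1 ≤ dist a1 b0 :=
      (IsUltrametricDist.dist_triangle_max a b0 a1).trans
        (max_le hdlt.le (dist_comm a1 b0 ▸ le_refl _))
    have := hfmono a1 ha1A a ha (ha1min a ha haa1)
    exact absurd (this.trans_lt hdlt) (lt_irrefl _)
  -- the set A₀
  set D := setDist A B with hDdef
  set A0 : Set M := {a ∈ A | dist a b0 ≤ D} with hA0
  have ha1A0 : a1 ∈ A0 := ⟨ha1A, ha1dist.le⟩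
  have hA0sub : A0 ⊆ A := fun a ha => ha.1
  -- members of A0 are close to a1
  have hclose : ∀ a ∈ A0, dist a a1 ≤ D := by
    intro a ha
    exact (IsUltrametricDist.dist_triangle_max a b0 a1).trans
      (max_le ha.2 (by rw [dist_comm]; exact ha1dist.le))
  -- A0 is spherically complete
  have hscA0 : IsSphericallyComplete A0 := by
    intro ι c r hι hc hr hnest
    set c' : Option ι → M := fun o => o.elim a1 c with hc'
    set r' : Option ι → ℝ := fun o => o.elim D r with hr'
    have hnest' : ∀ i j, Metric.closedBall (c' i) (r' i) ⊆ Metric.closedBall (c' j) (r' j) ∨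
        Metric.closedBall (c' j) (r' j) ⊆ Metric.closedBall (c' i) (r' i) := by
      have base : ∀ i, Metric.closedBall (c i) (r i) ⊆ Metric.closedBall a1 D ∨
          Metric.closedBall a1 D ⊆ Metric.closedBall (c i) (r i) := by
        intro i
        rcases le_total (r i) D with h | h
        · exact Or.inl (ultra_ball_subset_s8 (hclose _ (hc i)) h)
        · exact Or.inr (ultra_ball_subset_s8 (by rw [dist_comm]; exact (hclose _ (hc i)).trans h) h)
      rintro (_ | i) (_ | j)
      · exact Or.inl (le_refl _)
      · exact (base j).symm
      · exact base i
      · exact hnest i j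
    obtain ⟨z, hzA, hz⟩ := hscA (Option ι) c' r' ⟨none⟩
      (fun o => by cases o with | none => exact ha1A | some i => exact (hc i).1)
      (fun o => by cases o with | none => exact hD0 | some i => exact hr i) hnest'
    have hznone : z ∈ Metric.closedBall a1 D := by
      have := Set.mem_iInter.mp hz none
      simpa [hc', hr'] using this
    have hzA0 : z ∈ A0 := by
      refine ⟨hzA, ?_⟩
      calc dist z b0 ≤ max (dist z a1) (dist a1 b0) := IsUltrametricDist.dist_triangle_max _ _ _
        _ ≤ D := max_le (Metric.mem_closedBall.mp hznone) ha1dist.le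
    refine ⟨z, hzA0, Set.mem_iInter.mpr fun i => ?_⟩
    have := Set.mem_iInter.mp hz (some i)
    simpa [hc', hr'] using this
  -- A0 is T-invariant
  have hTA0 : Set.MapsTo T A0 A0 := by
    intro a ha
    refine ⟨hTA ha.1, ?_⟩
    have : dist (T a) (T b0) ≤ dist a b0 := hne a (Or.inl ha.1) b0 (Or.inr hb0B)
    rw [hb0] at this
    exact this.trans ha.2
  -- fixed point in A0
  obtain ⟨a0, ha0A0, ha0⟩ := exists_fixed_point hscA0 ⟨a1, ha1A0⟩ T hTA0
    (fun x hx y hy => hne x (Or.inl hx.1) y (Or.inl hy.1))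
    (fun x hx => hsco x (Or.inl hx.1))
  exact ⟨a0, ha0A0.1, b0, hb0B, ha0, hb0,
    le_antisymm ha0A0.2 (hD_le a0 ha0A0.1 b0 hb0B)⟩
end

section
/- Let (M, d) be an ultrametric space, let A and B be nonempty subsets of M with B bounded and δ(B) ≤ dist(A, B), and let T : A ∪ B → A ∪ B be a cyclic mapping (T(A) ⊆ B and T(B) ⊆ A). Then every point a* ∈ A for which there exists b* ∈ B with d(a*, b*) = dist(A, B) is a best proximity point of T, i.e., d(a*, Ta*) = dist(A, B). -/
/-- For a cyclic mapping `T` on `A ∪ B` with `δ(B) ≤ dist(A, B)`, every point of `A`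
realizing the distance `dist(A, B)` to some point of `B` is a best proximity point. -/
theorem best_proximity_point_cyclic {M : Type*} [MetricSpace M] [IsUltrametricDist M]
    (A B : Set M) (hA : A.Nonempty) (hB : B.Nonempty)
    (hbd : Bornology.IsBounded B)
    (hdiam : Metric.diam B ≤ setDist A B)
    (T : M → M) (hTAB : Set.MapsTo T A B) (hTBA : Set.MapsTo T B A)
    (astar : M) (ha : astar ∈ A)
    (bstar : M) (hb : bstar ∈ B) (hd : dist astar bstar = setDist A B) :
    dist astar (T astar) = setDist A B := by
  have hTa : T astar ∈ B := hTAB ha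
  have h1 : setDist A B ≤ dist astar (T astar) := by
    apply csInf_le
    · exact ⟨0, fun x hx => by obtain ⟨a, _, b, _, rfl⟩ := hx; positivity⟩
    · exact ⟨astar, ha, T astar, hTa, rfl⟩
  have h2 : dist astar (T astar) ≤ setDist A B := by
    have := IsUltrametricDist.dist_triangle_max astar bstar (T astar)
    have hbB : dist bstar (T astar) ≤ Metric.diam B := Metric.dist_le_diam_of_mem hbd hb hTa
    calc dist astar (T astar) ≤ max (dist astar bstar) (dist bstar (T astar)) := this
      _ ≤ setDist A B := max_le (le_of_eq hd) (hbB.trans hdiam)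
  linarith
end
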